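/- For nested nonsingular upper bidiagonal matrices B_{k-1} ⊂ B_k, the vector B_k^{−T} w_k equals (−(β_{k−1}/α_k) B_{k−1}^{−T} w_{k−1}; ‖w_k‖²), i.e., its first k−1 components are −(β_{k−1}/α_k) times B_{k−1}^{−T} w_{k−1} and its last component is ‖w_k‖². -/

import Mathlib

/-!
A matrix `M` whose last row vanishes off the diagonal is block upper triangular, with the leading
principal submatrix `Mₘ` and the scalar `M_{last,last}` as diagonal blocks. Hence `M⁻¹` is block upper
triangular with leading block `Mₘ⁻¹`, and comparing the last columns of `M⁻¹ M = 1` expresses the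
last column of `M⁻¹` through `Mₘ⁻¹` applied to the last column of `M`. For an upper bidiagonal `B`
that column is `β_{k-1} e_{k-1}`, so `w_k = (-(β_{k-1}/α_k) w_{k-1}; α_k⁻¹)`, and since
`B^{-T} = (B⁻¹)ᵀ` the leading components of `B^{-T} w_k` only see `B_{k-1}^{-T}`. The last component
of `(B⁻¹)ᵀ w_k` is `w_k ⬝ w_k`, because `w_k` is the last column of `B⁻¹`.
-/

open Matrix

namespace Matrix

theorem isUnit_det_of_isUpperTriangular {K m : Type*} [Field K] [Fintype m]
    [LinearOrder m] {M : Matrix m m K} (h : M.IsUpperTriangular) (hdiag : ∀ i, M i i ≠ 0) :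
    IsUnit M.det := by
  rw [det_of_isUpperTriangular h]
  exact isUnit_iff_ne_zero.mpr (Finset.prod_ne_zero_iff.mpr fun i _ => hdiag i)

section LastRow

variable {R : Type*} [CommRing R] {n : ℕ} {M : Matrix (Fin (n + 1)) (Fin (n + 1)) R}

theorem mul_apply_last_of_last_row (hM : ∀ j : Fin n, M (Fin.last n) j.castSucc = 0)
    (N : Matrix (Fin (n + 1)) (Fin (n + 1)) R) (j : Fin (n + 1)) :
    (M * N) (Fin.last n) j = M (Fin.last n) (Fin.last n) * N (Fin.last n) j := by
  simp [mul_apply, Fin.sum_univ_castSucc, hM]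

theorem mul_apply_castSucc_of_last_row (hM : ∀ j : Fin n, M (Fin.last n) j.castSucc = 0)
    (N : Matrix (Fin (n + 1)) (Fin (n + 1)) R) (i : Fin (n + 1)) (j : Fin n) :
    (N * M) i j.castSucc = ∑ l : Fin n, N i l.castSucc * M l.castSucc j.castSucc := by
  simp [mul_apply, Fin.sum_univ_castSucc, hM]

variable (hM : ∀ j : Fin n, M (Fin.last n) j.castSucc = 0) (hdet : IsUnit M.det)
include hM hdet

theorem inv_apply_last_castSucc_of_last_row (j : Fin n) : M⁻¹ (Fin.last n) j.castSucc = 0 := by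
  have hunit : IsUnit (M (Fin.last n) (Fin.last n)) := by
    refine IsUnit.of_mul_eq_one (M⁻¹ (Fin.last n) (Fin.last n)) ?_
    rw [← mul_apply_last_of_last_row hM, mul_nonsing_inv M hdet, one_apply_eq]
  have h := mul_apply_last_of_last_row hM M⁻¹ j.castSucc
  rw [mul_nonsing_inv M hdet, one_apply_ne (Fin.castSucc_lt_last j).ne'] at h
  exact hunit.mul_right_eq_zero.mp h.symm

theorem inv_submatrix_castSucc_of_last_row :
    (M.submatrix Fin.castSucc Fin.castSucc)⁻¹ = M⁻¹.submatrix Fin.castSucc Fin.castSucc := by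
  refine inv_eq_left_inv (ext fun i j => ?_)
  have h := congrFun (congrFun (nonsing_inv_mul M hdet) i.castSucc) j.castSucc
  rw [mul_apply_castSucc_of_last_row hM] at h
  simpa [mul_apply, one_apply] using h

theorem inv_apply_castSucc_last_mul_of_last_row (i : Fin n) :
    M⁻¹ i.castSucc (Fin.last n) * M (Fin.last n) (Fin.last n) =
      -((M.submatrix Fin.castSucc Fin.castSucc)⁻¹ *ᵥ fun j => M j.castSucc (Fin.last n)) i := by
  have h := congrFun (congrFun (nonsing_inv_mul M hdet) i.castSucc) (Fin.last n)
  rw [one_apply_ne (Fin.castSucc_lt_last i).ne, mul_apply, Fin.sum_univ_castSucc] at h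
  rw [inv_submatrix_castSucc_of_last_row hM hdet]
  simp only [mulVec, dotProduct, submatrix_apply]
  linear_combination h

theorem transpose_inv_mulVec_castSucc_of_last_row (v : Fin (n + 1) → R) (i : Fin n) :
    (Mᵀ⁻¹ *ᵥ v) i.castSucc = ((M.submatrix Fin.castSucc Fin.castSucc)ᵀ⁻¹ *ᵥ (v ∘ Fin.castSucc)) i := by
  rw [← transpose_nonsing_inv, ← transpose_nonsing_inv, mulVec_transpose, mulVec_transpose,
    inv_submatrix_castSucc_of_last_row hM hdet]
  simp [vecMul, dotProduct, Fin.sum_univ_castSucc, inv_apply_last_castSucc_of_last_row hM hdet]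

end LastRow

end Matrix

/-- For nested nonsingular upper bidiagonal matrices `B_{k-1} ⊂ B_k`, the vector
`B_k^{−T} w_k` has first components `−(β_{k−1}/α_k) B_{k−1}^{−T} w_{k−1}` and
last component `‖w_k‖²`. -/
theorem stmt_8 {k : ℕ} (α : Fin (k+2) → ℝ) (β : Fin (k+1) → ℝ)
    (hα : ∀ i, α i ≠ 0)
    (B : Matrix (Fin (k+2)) (Fin (k+2)) ℝ)
    (hdiag : ∀ i, B i i = α i)
    (hsuper : ∀ i : Fin (k+1), B i.castSucc i.succ = β i)
    (hzero : ∀ i j : Fin (k+2), (i : ℕ) ≠ (j : ℕ) → (j : ℕ) ≠ (i : ℕ) + 1 →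
      B i j = 0)
    (Bm : Matrix (Fin (k+1)) (Fin (k+1)) ℝ)
    (hBm : Bm = B.submatrix Fin.castSucc Fin.castSucc)
    (w : Fin (k+2) → ℝ) (hw : w = fun i => B⁻¹ i (Fin.last (k+1)))
    (wm : Fin (k+1) → ℝ) (hwm : wm = fun i => Bm⁻¹ i (Fin.last k)) :
    (∀ i : Fin (k+1),
      (Bᵀ)⁻¹.mulVec w i.castSucc =
        -(β (Fin.last k) / α (Fin.last (k+1))) * (Bmᵀ)⁻¹.mulVec wm i) ∧
    (Bᵀ)⁻¹.mulVec w (Fin.last (k+1)) = ∑ i, (w i)^2 := by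
  subst hw hwm hBm
  have hlast : ∀ j : Fin (k+1), B (Fin.last (k+1)) j.castSucc = 0 := fun j =>
    hzero _ _ (by simp; omega) (by simp; omega)
  have hdet : IsUnit B.det :=
    isUnit_det_of_isUpperTriangular (fun i j (hij : j < i) => hzero i j (by omega) (by omega))
      fun i => hdiag i ▸ hα i
  have hcol : (fun j : Fin (k+1) => B j.castSucc (Fin.last (k+1))) =
      Pi.single (Fin.last k) (β (Fin.last k)) := by
    ext j
    rcases eq_or_ne j (Fin.last k) with rfl | hj
    · simpa using hsuper (Fin.last k)
    · rw [Pi.single_eq_of_ne hj]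
      have : (j : ℕ) ≠ k := fun h => hj (Fin.ext h)
      exact hzero _ _ (by simp; omega) (by simp; omega)
  have hw_cs : (fun i => B⁻¹ i (Fin.last (k+1))) ∘ Fin.castSucc =
      -(β (Fin.last k) / α (Fin.last (k+1))) •
        fun i => (B.submatrix Fin.castSucc Fin.castSucc)⁻¹ i (Fin.last k) := by
    ext i
    have h := inv_apply_castSucc_last_mul_of_last_row hlast hdet i
    simp only [hdiag, hcol, mulVec, dotProduct_single] at h
    simp only [Function.comp_apply, Pi.smul_apply, smul_eq_mul]
    field_simp [hα]
    linear_combination h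
  refine ⟨fun i => ?_, ?_⟩
  · rw [transpose_inv_mulVec_castSucc_of_last_row hlast hdet, hw_cs, mulVec_smul]
    rfl
  · rw [← transpose_nonsing_inv, mulVec_transpose]
    simp [vecMul, dotProduct, sq]
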